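/- Let m ≥ 3 be odd, ω = e^{2πi/m}, q = 2cos(π/(2m)). For f(x_1,x_2) = A x_1 x_2 + B x_1 + C x_2 with A,B,C ∈ Z/mZ, the sum S(f) = (1/4) Σ_{x_1,x_2 ∈ {-1,1}} x_1 x_2 ω^{f(x)} satisfies |S(f)| ≤ q/2, with the maximum attained when B = C = 0 and A = ±⌊(m+1)/4⌋. -/

import Mathlib

/-- The two-variable normalized sum
`S(f) = (1/4) Σ_{x₁,x₂ ∈ {-1,1}} x₁ x₂ ω^{A x₁ x₂ + B x₁ + C x₂}`. -/
noncomputable def twoVarSum (m : ℕ) (A B C : ZMod m) : ℂ :=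
  (1 / 4) * ∑ x : Bool × Bool,
    (((if x.1 then (1 : ℤ) else -1) * (if x.2 then (1 : ℤ) else -1) : ℤ) : ℂ) *
      Complex.exp (2 * (Real.pi : ℂ) * Complex.I *
        (((A.val : ℤ) * (if x.1 then (1 : ℤ) else -1) * (if x.2 then (1 : ℤ) else -1) +
            (B.val : ℤ) * (if x.1 then (1 : ℤ) else -1) +
            (C.val : ℤ) * (if x.2 then (1 : ℤ) else -1) : ℤ) : ℂ) / (m : ℂ))

/-!
Pairing the four terms gives `S = (e^{iα} cos β - e^{-iα} cos γ) / 2` with `α = 2πA/m`,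
`β = 2π(B + C)/m`, `γ = 2π(B - C)/m`, so `4 |S|² = u² + v² - 2uvw` for `u = cos β`, `v = cos γ`,
`w = cos 2α`. For odd `m` every `cos (2πk/m)` lies in `[-cos (π/m), 1]`, and on that box
`u² + v² - 2uvw ≤ 2 + 2 cos (π/m) = 4 cos² (π/(2m))`. The bound is attained at `u = v = 1`,
`w = -cos (π/m)`, that is, for `B = C = 0` and `4A ≡ ±1 (mod m)`.
-/

open Real

lemma cos_two_pi_mul_div_eq_of_intCast_eq {m : ℕ} {k l : ℤ} (h : (k : ZMod m) = l) :
    cos (2 * π * k / m) = cos (2 * π * l / m) := by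
  rcases eq_or_ne m 0 with rfl | hm
  · simp
  obtain ⟨j, hj⟩ := (ZMod.intCast_eq_intCast_iff_dvd_sub k l m).1 h
  have hl : (l : ℝ) = k + m * j := by exact_mod_cast (by omega : l = k + m * j)
  rw [hl, ← cos_add_int_mul_two_pi _ j]
  field_simp

-- For odd `m` the `m`-th roots of unity closest to `-1` are `exp (± π i (m - 1) / m)`.
lemma neg_cos_pi_div_le_cos_two_pi_mul_div {m : ℕ} (hodd : Odd m) (k : ℤ) :
    -cos (π / m) ≤ cos (2 * π * k / m) := by
  have hm : (0 : ℝ) < m := by exact_mod_cast hodd.pos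
  set r := k % m
  have hr0 : 0 ≤ r := Int.emod_nonneg k (by exact_mod_cast hodd.pos.ne')
  have hrm : r < m := Int.emod_lt_of_pos k (by exact_mod_cast hodd.pos)
  set j := |(m : ℤ) - 2 * r|
  -- `j ≠ 0` because `m - 2 r` is odd
  have hj1 : (1 : ℝ) ≤ j := by
    refine mod_cast Int.one_le_abs fun h => ?_
    obtain ⟨t, ht⟩ := hodd
    omega
  have hjm : (j : ℝ) ≤ m := mod_cast abs_le.2 ⟨by omega, by omega⟩
  have hcos : cos (π * j / m) = -cos (2 * π * r / m) := by
    have : π * (j : ℝ) / m = |π * (m - 2 * r) / m| := by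
      rw [abs_div, abs_mul, abs_of_pos pi_pos, abs_of_pos hm]; push_cast [j]; rfl
    rw [this, cos_abs, show π * (m - 2 * r) / m = π - 2 * π * r / m by field_simp, cos_pi_sub]
  rw [cos_two_pi_mul_div_eq_of_intCast_eq (ZMod.intCast_mod k m).symm,
    ← neg_neg (cos (2 * π * r / m)), ← hcos, neg_le_neg_iff]
  apply cos_le_cos_of_nonneg_of_le_pi (by positivity)
  · rw [div_le_iff₀ hm]; gcongr
  · gcongr; exact le_mul_of_one_le_right pi_pos.le hj1

lemma cos_two_pi_mul_two_mul_val_div {m : ℕ} [NeZero m] {A : ZMod m} {t : ℕ}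
    (hA : A = t ∨ A = -t) :
    cos (2 * π * ((2 * A.val : ℤ) : ℝ) / m) = cos (2 * π * ((2 * t : ℤ) : ℝ) / m) := by
  have hval : ((2 * A.val : ℤ) : ZMod m) = 2 * A := by push_cast; rw [ZMod.natCast_zmod_val]
  rcases hA with rfl | rfl
  · exact cos_two_pi_mul_div_eq_of_intCast_eq (by rw [hval]; push_cast; rfl)
  · rw [← cos_neg, ← neg_div, ← mul_neg, ← Int.cast_neg]
    exact cos_two_pi_mul_div_eq_of_intCast_eq (by rw [Int.cast_neg, hval]; push_cast; ring)

lemma cos_two_pi_mul_two_mul_div_eq_neg_cos_pi_div {m t : ℕ}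
    (ht : 4 * t + 1 = m ∨ 4 * t = m + 1) :
    cos (2 * π * ((2 * t : ℤ) : ℝ) / m) = -cos (π / m) := by
  have hm : (m : ℝ) ≠ 0 := by exact_mod_cast (by omega : m ≠ 0)
  rcases ht with ht | ht
  · have ht' : 4 * (t : ℝ) + 1 = m := by exact_mod_cast ht
    rw [← cos_pi_sub]
    congr 1
    push_cast
    field_simp
    linear_combination ht'
  · have ht' : 4 * (t : ℝ) = m + 1 := by exact_mod_cast ht
    rw [← cos_add_pi]
    congr 1
    push_cast
    field_simp
    linear_combination ht'

lemma sq_add_sq_sub_two_mul_mul_le {u v w d : ℝ} (hu : u ∈ Set.Icc (-d) 1)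
    (hv : v ∈ Set.Icc (-d) 1) (hw : w ∈ Set.Icc (-d) 1) (hd : d ≤ 1) :
    u ^ 2 + v ^ 2 - 2 * u * v * w ≤ 2 + 2 * d := by
  obtain ⟨hu₁, hu₂⟩ := hu
  obtain ⟨hv₁, hv₂⟩ := hv
  obtain ⟨hw₁, hw₂⟩ := hw
  rcases le_total 0 (u * v) with huv | huv
  · have hu1 : u ^ 2 ≤ 1 := by nlinarith
    have hv1 : v ^ 2 ≤ 1 := by nlinarith
    have huv1 : u * v ≤ 1 := by nlinarith
    calc u ^ 2 + v ^ 2 - 2 * u * v * w ≤ u ^ 2 + v ^ 2 + 2 * d * (u * v) := by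
          nlinarith [mul_le_mul_of_nonneg_left hw₁ huv]
      _ ≤ 2 + 2 * d := by nlinarith
  · calc u ^ 2 + v ^ 2 - 2 * u * v * w ≤ (u - v) ^ 2 := by
          nlinarith [mul_le_mul_of_nonpos_left hw₂ huv]
      _ ≤ (1 + d) ^ 2 := sq_le_sq' (by linarith) (by linarith)
      _ ≤ 2 + 2 * d := by nlinarith

namespace Complex

lemma exp_signed_sum (a b c : ℂ) :
    (exp ((a + b + c) * I) - exp ((-a + b - c) * I) - exp ((-a - b + c) * I) +
        exp ((a - b - c) * I)) / 4 =
      (exp (a * I) * cos (b + c) - exp (-a * I) * cos (b - c)) / 2 := by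
  simp only [cos, add_mul, sub_mul, neg_mul, exp_add, exp_sub, exp_neg]
  field_simp
  ring

lemma sq_norm_exp_mul_I_mul_sub (α u v : ℝ) :
    ‖exp (α * I) * u - exp (-α * I) * v‖ ^ 2 = u ^ 2 + v ^ 2 - 2 * u * v * Real.cos (2 * α) := by
  rw [Complex.sq_norm, normSq_apply, Real.cos_two_mul]
  simp only [sub_re, sub_im, mul_re, mul_im, exp_re, exp_im, ofReal_re, ofReal_im, I_re, I_im,
    neg_re, neg_im, mul_zero, mul_one, sub_self, add_zero, zero_add, sub_zero, neg_zero,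
    Real.exp_zero, one_mul, Real.cos_neg, Real.sin_neg, mul_neg, neg_mul, sub_neg_eq_add]
  linear_combination (u + v) ^ 2 * Real.sin_sq_add_cos_sq α

end Complex

open Complex in
lemma twoVarSum_eq (m : ℕ) (A B C : ZMod m) :
    twoVarSum m A B C =
      (exp (↑(2 * π * A.val / m) * I) * ↑(Real.cos (2 * π * B.val / m + 2 * π * C.val / m)) -
        exp (-↑(2 * π * A.val / m) * I) *
          ↑(Real.cos (2 * π * B.val / m - 2 * π * C.val / m))) / 2 := by
  push_cast
  rw [← exp_signed_sum]
  simp only [twoVarSum, Fintype.sum_prod_type, Fintype.sum_bool, if_true]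
  push_cast
  ring_nf

lemma sq_norm_twoVarSum (m : ℕ) (A B C : ZMod m) :
    ‖twoVarSum m A B C‖ ^ 2 =
      (cos (2 * π * ((B.val + C.val : ℤ) : ℝ) / m) ^ 2 +
        cos (2 * π * ((B.val - C.val : ℤ) : ℝ) / m) ^ 2 -
        2 * cos (2 * π * ((B.val + C.val : ℤ) : ℝ) / m) *
          cos (2 * π * ((B.val - C.val : ℤ) : ℝ) / m) *
          cos (2 * π * ((2 * A.val : ℤ) : ℝ) / m)) / 4 := by
  rw [twoVarSum_eq, norm_div, div_pow, Complex.sq_norm_exp_mul_I_mul_sub, Complex.norm_two]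
  push_cast
  ring_nf

theorem stmt_13_general (m : ℕ) (hodd : Odd m) (A B C : ZMod m) :
    ‖twoVarSum m A B C‖ ≤ 2 * Real.cos (Real.pi / (2 * m)) / 2 ∧
      (B = 0 → C = 0 → (A = (((m + 1) / 4 : ℕ) : ZMod m) ∨ A = -(((m + 1) / 4 : ℕ) : ZMod m)) →
        ‖twoVarSum m A B C‖ = 2 * Real.cos (Real.pi / (2 * m)) / 2) := by
  have hm : m ≠ 0 := hodd.pos.ne'
  have : NeZero m := ⟨hm⟩
  set d := cos (π / m)
  set q := cos (π / (2 * m))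
  have hmR : (1 : ℝ) ≤ m := by exact_mod_cast hodd.pos
  have hq : 0 ≤ q := cos_nonneg_of_mem_Icc
    ⟨by linarith [show 0 < π / (2 * m) by positivity, pi_pos], by gcongr; linarith⟩
  have hq2 : q ^ 2 = (2 + 2 * d) / 4 := by
    rw [cos_sq, show 2 * (π / (2 * m)) = π / m by field_simp]; ring
  rw [mul_div_cancel_left₀ q two_ne_zero, ← sq_le_sq₀ (norm_nonneg _) hq,
    ← sq_eq_sq₀ (norm_nonneg _) hq, sq_norm_twoVarSum, hq2]
  refine ⟨?_, fun hB hC hA => ?_⟩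
  · have hcos (k : ℤ) : cos (2 * π * k / m) ∈ Set.Icc (-d) 1 :=
      ⟨neg_cos_pi_div_le_cos_two_pi_mul_div hodd k, cos_le_one _⟩
    gcongr
    exact sq_add_sq_sub_two_mul_mul_le (hcos _) (hcos _) (hcos _) (cos_le_one _)
  · obtain ⟨s, hs⟩ := hodd
    rw [hB, hC, cos_two_pi_mul_two_mul_val_div hA,
      cos_two_pi_mul_two_mul_div_eq_neg_cos_pi_div (by omega)]
    simp only [ZMod.val_zero, CharP.cast_eq_zero, add_zero, sub_self, Int.cast_zero, mul_zero,
      zero_div, cos_zero]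
    ring

theorem stmt_13 (m : ℕ) [NeZero m] (hm : 3 ≤ m) (hodd : Odd m) (A B C : ZMod m) :
    ‖twoVarSum m A B C‖ ≤ 2 * Real.cos (Real.pi / (2 * m)) / 2 ∧
      (B = 0 → C = 0 → (A = (((m + 1) / 4 : ℕ) : ZMod m) ∨ A = -(((m + 1) / 4 : ℕ) : ZMod m)) →
        ‖twoVarSum m A B C‖ = 2 * Real.cos (Real.pi / (2 * m)) / 2) :=
  stmt_13_general m hodd A B C
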